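/- In a restriction category with restriction coproducts and a restriction zero, each coproduct injection i : A → A + B is a restriction monic, whose restriction retraction is ⟨1|0⟩ : A + B → A, and the restriction idempotent i ∘ i* equals 1_A + 0 : A + B → A + B. -/

import Mathlib

open CategoryTheory CategoryTheory.Limits

universe v u

/-- A restriction category: a category with an operation assigning to each
morphism `f : A ⟶ B` a morphism `ρ f : A ⟶ A` satisfying axioms R.1–R.4.
(Composition is written diagrammatically: `f ≫ g` is "first `f`, then `g`",
so the paper's `g ∘ f` is `f ≫ g`.) -/
class RestrictionCategory (C : Type u) [Category.{v} C] where
  ρ : ∀ {A B : C}, (A ⟶ B) → (A ⟶ A)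
  R1 : ∀ {A B : C} (f : A ⟶ B), ρ f ≫ f = f
  R2 : ∀ {A B D : C} (f : A ⟶ B) (g : A ⟶ D), ρ f ≫ ρ g = ρ g ≫ ρ f
  R3 : ∀ {A B D : C} (f : A ⟶ B) (g : A ⟶ D), ρ (ρ f ≫ g) = ρ f ≫ ρ g
  R4 : ∀ {A B D : C} (f : A ⟶ B) (g : B ⟶ D), f ≫ ρ g = ρ (f ≫ g) ≫ f

open RestrictionCategory

open ZeroObject

/-! By R.4, `inl ≫ ρ ⟨f|g⟩ = ρ f ≫ inl` and likewise for `inr`, so `ρ ⟨1|0⟩ = ρ 1 + ρ 0`.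
Here `ρ 1 = 1`, and `ρ 0 = 0` because the zero map `B ⟶ A` factors through the restriction
idempotent `0 : B ⟶ B`. -/

namespace RestrictionCategory

variable {C : Type u} [Category.{v} C] [RestrictionCategory C]

theorem ρ_id (A : C) : ρ (𝟙 A) = 𝟙 A := by
  simpa using R1 (𝟙 A)

theorem ρ_comp_of_ρ_eq_self {A B : C} {e : A ⟶ A} (he : ρ e = e) (f : A ⟶ B) :
    ρ (e ≫ f) = e ≫ ρ f := by
  simpa only [he] using R3 e f

theorem ρ_coprod_desc {X Y Z : C} [HasBinaryCoproduct X Y] (f : X ⟶ Z) (g : Y ⟶ Z) :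
    ρ (coprod.desc f g) = coprod.map (ρ f) (ρ g) := by
  ext
  · rw [R4, coprod.inl_desc, coprod.inl_map]
  · rw [R4, coprod.inr_desc, coprod.inr_map]

variable [HasZeroMorphisms C]

theorem ρ_zero {A : C} (hA : ρ (0 : A ⟶ A) = 0) (B : C) : ρ (0 : A ⟶ B) = 0 := by
  simpa using ρ_comp_of_ρ_eq_self hA (0 : A ⟶ B)

end RestrictionCategory

theorem CategoryTheory.Limits.coprod.desc_id_zero_comp_inl {C : Type u} [Category.{v} C]
    [HasZeroMorphisms C] (A B : C) [HasBinaryCoproduct A B] :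
    coprod.desc (𝟙 A) (0 : B ⟶ A) ≫ coprod.inl = coprod.map (𝟙 A) (0 : B ⟶ B) := by
  ext <;> simp only [coprod.inl_desc_assoc, coprod.inr_desc_assoc, coprod.inl_map,
    coprod.inr_map, Category.id_comp, zero_comp]

theorem stmt_8_general {C : Type u} [Category.{v} C] [RestrictionCategory C]
    [HasBinaryCoproducts C] [HasZeroMorphisms C]
    (hzero : ∀ A : C, ρ (0 : A ⟶ A) = (0 : A ⟶ A))
    (A B : C) :
    (coprod.inl : A ⟶ A ⨿ B) ≫ coprod.desc (𝟙 A) (0 : B ⟶ A) = 𝟙 A ∧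
    coprod.desc (𝟙 A) (0 : B ⟶ A) ≫ (coprod.inl : A ⟶ A ⨿ B) =
      ρ (coprod.desc (𝟙 A) (0 : B ⟶ A)) ∧
    coprod.desc (𝟙 A) (0 : B ⟶ A) ≫ (coprod.inl : A ⟶ A ⨿ B) =
      coprod.map (𝟙 A) (0 : B ⟶ B) := by
  have hρ : ρ (coprod.desc (𝟙 A) (0 : B ⟶ A)) = coprod.map (𝟙 A) (0 : B ⟶ B) := by
    rw [ρ_coprod_desc, ρ_id, ρ_zero (hzero B)]
  exact ⟨coprod.inl_desc _ _, hρ ▸ coprod.desc_id_zero_comp_inl A B,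
    coprod.desc_id_zero_comp_inl A B⟩

/-- In a restriction category with restriction coproducts (finite coproducts
with total injections) and a restriction zero (zero object, with zero endomaps
being restriction idempotents), each coproduct injection `i : A ⟶ A ⨿ B` is a
restriction monic whose restriction retraction is `⟨1|0⟩ : A ⨿ B ⟶ A`, and
the restriction idempotent `i* ≫ i` equals `1 + 0 : A ⨿ B ⟶ A ⨿ B`. -/
theorem stmt_8 {C : Type u} [Category.{v} C] [RestrictionCategory C]
    [HasBinaryCoproducts C] [HasZeroObject C] [HasZeroMorphisms C]
    (htot : ∀ A B : C, ρ (coprod.inl : A ⟶ A ⨿ B) = 𝟙 A ∧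
      ρ (coprod.inr : B ⟶ A ⨿ B) = 𝟙 B)
    (hzero : ∀ A : C, ρ (0 : A ⟶ A) = (0 : A ⟶ A))
    (A B : C) :
    (coprod.inl : A ⟶ A ⨿ B) ≫ coprod.desc (𝟙 A) (0 : B ⟶ A) = 𝟙 A ∧
    coprod.desc (𝟙 A) (0 : B ⟶ A) ≫ (coprod.inl : A ⟶ A ⨿ B) =
      ρ (coprod.desc (𝟙 A) (0 : B ⟶ A)) ∧
    coprod.desc (𝟙 A) (0 : B ⟶ A) ≫ (coprod.inl : A ⟶ A ⨿ B) =
      coprod.map (𝟙 A) (0 : B ⟶ B) :=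
  stmt_8_general hzero A B
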